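/- Let h ≥ 3 and let A = {a₁ < a₂ < ⋯ < a_k} be an arithmetic progression of k ≥ h+1 positive integers with common difference d. Then |h^∧_± A| ≥ 2hk − h² + 1 if d = 2a₁, and |h^∧_± A| ≥ 2hk − h² + 2 otherwise. Moreover |h^∧_± A| = 2hk − h² + 1 if and only if d = 2a₁. -/
import Mathlib


open Finset

/-- The restricted `h`-fold signed sumset of a finite set `A` of integers:
all sums `∑ λᵢ aᵢ` with `λᵢ ∈ {-1,0,1}` and `∑ |λᵢ| = h`. -/
def signedSumset (h : ℕ) (A : Finset ℤ) : Set ℤ :=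
  {s | ∃ f : ℤ → ℤ, (∀ a, f a = -1 ∨ f a = 0 ∨ f a = 1) ∧ (∀ a ∉ A, f a = 0) ∧
    (∑ a ∈ A, |f a|) = (h : ℤ) ∧ s = ∑ a ∈ A, f a * a}


/-- sum of card distinct naturals is at least 0+1+...+(card-1) -/
lemma sum_lower_aux : ∀ (n : ℕ) (I : Finset ℕ), I ⊆ range n →
    ∑ i ∈ range I.card, i ≤ ∑ i ∈ I, i := by
  intro n
  induction n with
  | zero => intro I hI; simp [Finset.subset_empty.mp (by simpa using hI)]
  | succ n ih =>
    intro I hI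
    by_cases hn : n ∈ I
    · have h1 : I.erase n ⊆ range n := by
        intro x hx
        have hx1 := Finset.mem_erase.mp hx
        have := hI hx1.2
        simp only [Finset.mem_range] at this ⊢
        omega
      have h2 := ih _ h1
      have hc : I.card = (I.erase n).card + 1 := by
        rw [Finset.card_erase_of_mem hn]
        have : 1 ≤ I.card := Finset.card_pos.mpr ⟨n, hn⟩
        omega
      have hcc : (I.erase n).card ≤ n := by
        have := Finset.card_le_card h1
        simpa using this
      have hs : ∑ i ∈ I, i = n + ∑ i ∈ I.erase n, i :=
        (Finset.add_sum_erase _ _ hn).symm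
      rw [hc, Finset.sum_range_succ, hs]
      omega
    · exact ih I (fun x hx => by
        have := hI hx
        simp only [Finset.mem_range] at this ⊢
        rcases Nat.lt_succ_iff_lt_or_eq.mp this with h | h
        · exact h
        · exact absurd (h ▸ hx) hn)

lemma Tcast : ∀ n : ℕ, 2 * ((∑ i ∈ range n, i : ℕ) : ℤ) = (n : ℤ) * ((n : ℤ) - 1) := by
  intro n
  induction n with
  | zero => simp
  | succ n ih =>
    rw [Finset.sum_range_succ]
    push_cast
    push_cast at ih
    ring_nf
    ring_nf at ih
    linarith

lemma sum_lower_int (I : Finset ℕ) :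
    (I.card : ℤ) * ((I.card : ℤ) - 1) ≤ 2 * ∑ i ∈ I, (i : ℤ) := by
  obtain ⟨n, hn⟩ : ∃ n, I ⊆ range n := ⟨I.sup id + 1, fun x hx =>
    Finset.mem_range.mpr (Nat.lt_succ_of_le (Finset.le_sup (f := id) hx))⟩
  have h := sum_lower_aux n I hn
  have h2 : ((∑ i ∈ range I.card, i : ℕ) : ℤ) ≤ ((∑ i ∈ I, i : ℕ) : ℤ) := by exact_mod_cast h
  have h3 := Tcast I.card
  have h4 : ((∑ i ∈ I, i : ℕ) : ℤ) = ∑ i ∈ I, (i : ℤ) := by push_cast; rfl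
  linarith

lemma sum_upper_int (n : ℕ) (I : Finset ℕ) (hI : I ⊆ range n) :
    2 * ∑ i ∈ I, (i : ℤ) ≤ 2 * (I.card : ℤ) * n - (I.card : ℤ) * ((I.card : ℤ) + 1) := by
  classical
  set J := I.image (fun i => n - 1 - i) with hJ
  have hmem : ∀ i ∈ I, i < n := fun i hi => Finset.mem_range.mp (hI hi)
  have hinj : Set.InjOn (fun i => n - 1 - i) I := by
    intro x hx y hy hxy
    have hx' := hmem x hx; have hy' := hmem y hy
    simp only at hxy
    omega
  have hcard : J.card = I.card := Finset.card_image_of_injOn hinj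
  have hJsum : ∑ j ∈ J, (j : ℤ) = (I.card : ℤ) * ((n : ℤ) - 1) - ∑ i ∈ I, (i : ℤ) := by
    rw [hJ, Finset.sum_image hinj]
    have : ∀ i ∈ I, (((n - 1 - i : ℕ)) : ℤ) = ((n : ℤ) - 1) - (i : ℤ) := by
      intro i hi
      have := hmem i hi
      push_cast [Nat.cast_sub (by omega : i ≤ n - 1), Nat.cast_sub (by omega : 1 ≤ n)]
      ring
    rw [Finset.sum_congr rfl this, Finset.sum_sub_distrib, Finset.sum_const, nsmul_eq_mul]
  have := sum_lower_int J
  rw [hcard, hJsum] at this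
  nlinarith [this]


def LoB (p m n : ℕ) : ℤ := (p:ℤ)*((p:ℤ)-1) + (m:ℤ)*((m:ℤ)+1) - 2*(m:ℤ)*(n:ℤ)
def HiB (p m n : ℕ) : ℤ := 2*(p:ℤ)*(n:ℤ) - (p:ℤ)*((p:ℤ)+1) - (m:ℤ)*((m:ℤ)-1)

def Ach (n p m : ℕ) (s : ℤ) : Prop :=
  ∃ P M : Finset ℕ, P ⊆ range n ∧ M ⊆ range n ∧ Disjoint P M ∧
    P.card = p ∧ M.card = m ∧ (∑ i ∈ P, (i:ℤ)) - (∑ i ∈ M, (i:ℤ)) = s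

lemma LoB_neg (p m n : ℕ) : LoB p m n = -HiB m p n := by unfold LoB HiB; ring

lemma HiB_succ (p m n : ℕ) (hp : 1 ≤ p) :
    HiB p m (n+1) = 2*(n:ℤ) + HiB (p-1) m n := by
  unfold HiB
  push_cast [Nat.cast_sub hp]
  ring

lemma LoB_succ (p m n : ℕ) (hm : 1 ≤ m) :
    LoB p m (n+1) = LoB p (m-1) n - 2*(n:ℤ) := by
  unfold LoB
  push_cast [Nat.cast_sub hm]
  ring

lemma even_pred_mul (x : ℤ) : Even (x*(x-1)) := by
  have h := Int.even_mul_succ_self (x-1)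
  have hx : (x-1)*(x-1+1) = x*(x-1) := by ring
  rwa [hx] at h

lemma even_succ_mul (x : ℤ) : Even (x*(x+1)) := Int.even_mul_succ_self x

lemma even_LoB (p m n : ℕ) : Even (LoB p m n) := by
  unfold LoB
  have h1 := even_pred_mul (p:ℤ)
  have h2 := even_succ_mul (m:ℤ)
  have h3 : Even (2*(m:ℤ)*(n:ℤ)) := ⟨(m:ℤ)*(n:ℤ), by ring⟩
  exact (h1.add h2).sub h3

lemma even_HiB (p m n : ℕ) : Even (HiB p m n) := by
  have := even_LoB m p n
  rw [LoB_neg] at this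
  simpa using this.neg

lemma par_lt (z Y : ℤ) (hY : Even Y) (h : 2*z < Y) : 2*z ≤ Y - 2 := by
  obtain ⟨r, rfl⟩ := hY; omega

lemma par_gt (z Y : ℤ) (hY : Even Y) (h : Y < 2*z) : Y + 2 ≤ 2*z := by
  obtain ⟨r, rfl⟩ := hY; omega

lemma ach_mono {n n' p m : ℕ} {s : ℤ} (hnn : n ≤ n') (h : Ach n p m s) : Ach n' p m s := by
  obtain ⟨P, M, hP, hM, hd, hcP, hcM, hs⟩ := h
  exact ⟨P, M, hP.trans (Finset.range_subset_range.mpr hnn), hM.trans (Finset.range_subset_range.mpr hnn),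
    hd, hcP, hcM, hs⟩

lemma ach_insert_P {n p m : ℕ} {s : ℤ} (h : Ach n p m s) : Ach (n+1) (p+1) m (s + n) := by
  obtain ⟨P, M, hP, hM, hd, hcP, hcM, hs⟩ := h
  have hnP : n ∉ P := fun hn => by simpa using Finset.mem_range.mp (hP hn)
  have hnM : n ∉ M := fun hn => by simpa using Finset.mem_range.mp (hM hn)
  refine ⟨insert n P, M, ?_, hM.trans (Finset.range_subset_range.mpr (Nat.le_succ n)), ?_, ?_, hcM, ?_⟩
  · intro x hx
    rcases Finset.mem_insert.mp hx with h | hx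
    · exact Finset.mem_range.mpr (by omega)
    · exact Finset.range_subset_range.mpr (Nat.le_succ n) (hP hx)
  · rw [Finset.disjoint_insert_left]
    exact ⟨hnM, hd⟩
  · rw [Finset.card_insert_of_notMem hnP, hcP]
  · rw [Finset.sum_insert hnP]
    push_cast
    linarith

lemma ach_insert_M {n p m : ℕ} {s : ℤ} (h : Ach n p m s) : Ach (n+1) p (m+1) (s - n) := by
  obtain ⟨P, M, hP, hM, hd, hcP, hcM, hs⟩ := h
  have hnP : n ∉ P := fun hn => by simpa using Finset.mem_range.mp (hP hn)
  have hnM : n ∉ M := fun hn => by simpa using Finset.mem_range.mp (hM hn)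
  refine ⟨P, insert n M, hP.trans (Finset.range_subset_range.mpr (Nat.le_succ n)), ?_, ?_, hcP, ?_, ?_⟩
  · intro x hx
    rcases Finset.mem_insert.mp hx with h | hx
    · exact Finset.mem_range.mpr (by omega)
    · exact Finset.range_subset_range.mpr (Nat.le_succ n) (hM hx)
  · rw [Finset.disjoint_insert_right]
    exact ⟨hnP, hd⟩
  · rw [Finset.card_insert_of_notMem hnM, hcM]
  · rw [Finset.sum_insert hnM]
    push_cast
    linarith

lemma ach_range_P (n p : ℕ) (hp : p ≤ n) : Ach n p 0 (∑ i ∈ range p, (i:ℤ)) :=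
  ⟨range p, ∅, Finset.range_subset_range.mpr hp, by simp, by simp, by simp, by simp, by simp⟩

lemma ach_range_M (n m : ℕ) (hm : m ≤ n) : Ach n 0 m (-∑ i ∈ range m, (i:ℤ)) :=
  ⟨∅, range m, by simp, Finset.range_subset_range.mpr hm, by simp, by simp, by simp, by simp⟩

lemma ach_F1 : Ach 4 2 1 3 := by
  refine ⟨{1,2}, {0}, ?_, ?_, ?_, ?_, ?_, ?_⟩ <;> decide

lemma ach_F2 : Ach 4 1 2 (-3) := by
  refine ⟨{0}, {1,2}, ?_, ?_, ?_, ?_, ?_, ?_⟩ <;> decide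

lemma resid1 (P M N S : ℤ) (hp : 1 ≤ P) (hm : 1 ≤ M) (hn : P + M ≤ N)
    (h1 : 2*(S - N) ≤ (P-1)*(P-2) + M*(M+1) - 2*M*N - 2)
    (h2 : 2*P*N - P*(P+1) - M*(M-1) + 2 ≤ 2*S) : False := by
  nlinarith [mul_nonneg (by linarith : (0:ℤ) ≤ N-P-M) (by linarith : (0:ℤ) ≤ P+M-1),
             mul_nonneg (by linarith : (0:ℤ) ≤ P-1) (by linarith : (0:ℤ) ≤ M)]

lemma resid2 (P M N S : ℤ) (hp : 1 ≤ P) (hm : 1 ≤ M) (hn : P + M ≤ N)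
    (h1 : 2*S ≤ P*(P-1) + M*(M+1) - 2*M*N - 2)
    (h2 : 2*P*N - P*(P+1) - (M-1)*(M-2) + 2 - 2*N ≤ 2*S) : False := by
  nlinarith [mul_nonneg (by linarith : (0:ℤ) ≤ N-P-M) (by linarith : (0:ℤ) ≤ P+M-1),
             mul_nonneg (by linarith : (0:ℤ) ≤ M-1) (by linarith : (0:ℤ) ≤ P),
             mul_nonneg (by linarith : (0:ℤ) ≤ P-1) (by linarith : (0:ℤ) ≤ M)]

lemma resid3 (P M N S : ℤ) (hp : 1 ≤ P) (hm : 1 ≤ M) (hpm2 : 2 ≤ P*M) (hn : N = P + M)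
    (h1 : 2*(S - N) ≤ (P-1)*(P-2) + M*(M+1) - 2*M*N - 2)
    (h2 : 2*P*N - P*(P+1) - (M-1)*(M-2) + 2 ≤ 2*(S + N)) : False := by
  nlinarith [mul_nonneg (by linarith : (0:ℤ) ≤ P-1) (by linarith : (0:ℤ) ≤ M-1), hpm2]

lemma key : ∀ n p m : ℕ, ∀ s : ℤ, p + m < n →
    ¬(p = 1 ∧ m = 1 ∧ s = 0) → LoB p m n ≤ 2 * s → 2 * s ≤ HiB p m n →
    Ach n p m s := by
  intro n
  induction n with
  | zero => intro p m s h; omega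
  | succ n ih =>
    intro p m s hlt hexc hlo hhi
    have hpm : p + m ≤ n := by omega
    by_cases hF0 : p = 0 ∧ m = 0
    · obtain ⟨rfl, rfl⟩ := hF0
      have hs0 : s = 0 := by
        simp only [LoB, HiB] at hlo hhi
        push_cast at hlo hhi
        omega
      exact ⟨∅, ∅, by simp, by simp, by simp, by simp, by simp, by simp [hs0]⟩
    by_cases hA : 1 ≤ p ∧ LoB (p-1) m n ≤ 2*(s - (n:ℤ)) ∧ ¬(p = 2 ∧ m = 1 ∧ s = (n:ℤ))
    · obtain ⟨hp1, hAlo, hAexc⟩ := hA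
      have hid := HiB_succ p m n hp1
      have hAhi : 2*(s - (n:ℤ)) ≤ HiB (p-1) m n := by linarith
      have hexc' : ¬(p - 1 = 1 ∧ m = 1 ∧ s - (n:ℤ) = 0) := by
        rintro ⟨h1, h2, h3⟩
        exact hAexc ⟨by omega, h2, by linarith⟩
      have hach := ach_insert_P (ih (p-1) m (s - (n:ℤ)) (by omega) hexc' hAlo hAhi)
      rw [Nat.sub_add_cancel hp1] at hach
      have hsv : s - (n:ℤ) + (n:ℤ) = s := by ring
      rwa [hsv] at hach
    by_cases hB : 1 ≤ m ∧ 2*(s + (n:ℤ)) ≤ HiB p (m-1) n ∧ ¬(p = 1 ∧ m = 2 ∧ s = -(n:ℤ))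
    · obtain ⟨hm1, hBhi, hBexc⟩ := hB
      have hid := LoB_succ p m n hm1
      have hBlo : LoB p (m-1) n ≤ 2*(s + (n:ℤ)) := by linarith
      have hexc' : ¬(p = 1 ∧ m - 1 = 1 ∧ s + (n:ℤ) = 0) := by
        rintro ⟨h1, h2, h3⟩
        exact hBexc ⟨h1, by omega, by linarith⟩
      have hach := ach_insert_M (ih p (m-1) (s + (n:ℤ)) (by omega) hexc' hBlo hBhi)
      rw [Nat.sub_add_cancel hm1] at hach
      have hsv : s + (n:ℤ) - (n:ℤ) = s := by ring
      rwa [hsv] at hach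
    by_cases hC : p + m < n ∧ LoB p m n ≤ 2*s ∧ 2*s ≤ HiB p m n
    · exact ach_mono (Nat.le_succ n) (ih p m s hC.1 hexc hC.2.1 hC.2.2)
    -- residual analysis
    rcases Nat.eq_zero_or_pos p with hp0 | hp1
    · -- p = 0, m ≥ 1
      subst hp0
      have hm1 : 1 ≤ m := by omega
      have hBup : HiB 0 (m-1) n < 2*(s + (n:ℤ)) := by
        by_contra hcon
        push_neg at hcon
        exact hB ⟨hm1, hcon, by simp⟩
      have hBup2 := par_gt _ _ (even_HiB 0 (m-1) n) hBup
      have e1 : HiB 0 m (n+1) = HiB 0 m n := by simp only [HiB]; push_cast; ring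
      have hhin : 2*s ≤ HiB 0 m n := by linarith
      have e2 : HiB 0 (m-1) n = -(((m:ℤ)-1)*((m:ℤ)-2)) := by
        simp only [HiB]; push_cast [Nat.cast_sub hm1]; ring
      have e3 : HiB 0 m n = -((m:ℤ)*((m:ℤ)-1)) := by simp only [HiB]; push_cast; ring
      by_cases hCl : LoB 0 m n ≤ 2*s
      · have hmn : m = n := by
          by_contra hne
          exact hC ⟨by omega, hCl, hhin⟩
        have hnm : (n:ℤ) = (m:ℤ) := by exact_mod_cast hmn.symm
        have hT := Tcast m
        have expand : -(((m:ℤ)-1)*((m:ℤ)-2)) + 2 - 2*(m:ℤ) = -((m:ℤ)*((m:ℤ)-1)) := by ring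
        have hge : -((m:ℤ)*((m:ℤ)-1)) ≤ 2*s := by
          rw [e2] at hBup2
          linarith
        have hsval : s = -∑ i ∈ range m, (i:ℤ) := by
          have hc : ((∑ i ∈ range m, i : ℕ):ℤ) = ∑ i ∈ range m, (i:ℤ) := by push_cast; rfl
          rw [e3] at hhin
          linarith [hT, hc.symm ▸ hT]
        rw [hsval]
        exact ach_range_M (n+1) m (by omega)
      · push_neg at hCl
        have hCl2 := par_lt _ _ (even_LoB 0 m n) hCl
        have e4 : LoB 0 m n = (m:ℤ)*((m:ℤ)+1) - 2*(m:ℤ)*(n:ℤ) := by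
          simp only [LoB]; push_cast; ring
        have hmn' : (m:ℤ) ≤ (n:ℤ) := by exact_mod_cast (by omega : m ≤ n)
        have hmm : (1:ℤ) ≤ (m:ℤ) := by exact_mod_cast hm1
        nlinarith [hCl2, hBup2, mul_nonneg (sub_nonneg.mpr hmn') (by linarith : (0:ℤ) ≤ (m:ℤ)-1)]
    rcases Nat.eq_zero_or_pos m with hm0 | hm1
    · -- m = 0, p ≥ 1
      subst hm0
      have hAdown : 2*(s - (n:ℤ)) < LoB (p-1) 0 n := by
        by_contra hcon
        push_neg at hcon
        exact hA ⟨hp1, hcon, by simp⟩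
      have hA2 := par_lt _ _ (even_LoB (p-1) 0 n) hAdown
      have e1 : LoB p 0 (n+1) = LoB p 0 n := by simp only [LoB]; push_cast; ring
      have hlon : LoB p 0 n ≤ 2*s := by linarith
      have e2 : LoB (p-1) 0 n = ((p:ℤ)-1)*((p:ℤ)-2) := by
        simp only [LoB]; push_cast [Nat.cast_sub hp1]; ring
      have e3 : LoB p 0 n = (p:ℤ)*((p:ℤ)-1) := by simp only [LoB]; push_cast; ring
      have e4 : HiB p 0 n = 2*(p:ℤ)*(n:ℤ) - (p:ℤ)*((p:ℤ)+1) := by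
        simp only [HiB]; push_cast; ring
      have hpn : (p:ℤ) ≤ (n:ℤ) := by exact_mod_cast (by omega : p ≤ n)
      have hpp : (1:ℤ) ≤ (p:ℤ) := by exact_mod_cast hp1
      by_cases hCu : 2*s ≤ HiB p 0 n
      · have hpn' : p = n := by
          by_contra hne
          exact hC ⟨by omega, hlon, hCu⟩
        have hnp : (n:ℤ) = (p:ℤ) := by exact_mod_cast hpn'.symm
        have hle : 2*s ≤ (p:ℤ)*((p:ℤ)-1) := by
          rw [e2] at hA2
          nlinarith [hA2]
        have hT := Tcast p
        have hsval : s = ∑ i ∈ range p, (i:ℤ) := by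
          have hc : ((∑ i ∈ range p, i : ℕ):ℤ) = ∑ i ∈ range p, (i:ℤ) := by push_cast; rfl
          rw [e3] at hlon
          linarith [hc ▸ hT]
        rw [hsval]
        exact ach_range_P (n+1) p (by omega)
      · push_neg at hCu
        have hCu2 := par_gt _ _ (even_HiB p 0 n) hCu
        rw [e2] at hA2
        rw [e4] at hCu2
        nlinarith [hA2, hCu2, mul_nonneg (sub_nonneg.mpr hpn) (by linarith : (0:ℤ) ≤ (p:ℤ)-1)]
    -- p ≥ 1, m ≥ 1
    by_cases hp11 : p = 1 ∧ m = 1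
    · obtain ⟨rfl, rfl⟩ := hp11
      have h1 : 2*(s - (n:ℤ)) < LoB 0 1 n := by
        by_contra hcon
        push_neg at hcon
        exact hA ⟨le_refl 1, hcon, by simp⟩
      have h2 : HiB 1 0 n < 2*(s + (n:ℤ)) := by
        by_contra hcon
        push_neg at hcon
        exact hB ⟨le_refl 1, hcon, by intro hcc; omega⟩
      have e1 : LoB 0 1 n = 2 - 2*(n:ℤ) := by simp only [LoB]; push_cast; ring
      have e2 : HiB 1 0 n = 2*(n:ℤ) - 2 := by simp only [HiB]; push_cast; ring
      have hs0 : s = 0 := by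
        rw [e1] at h1; rw [e2] at h2
        omega
      exact absurd ⟨rfl, rfl, hs0⟩ hexc
    by_cases hAex : p = 2 ∧ m = 1 ∧ s = (n:ℤ)
    · obtain ⟨rfl, rfl, rfl⟩ := hAex
      have hn3 : n = 3 := by
        by_contra hne
        refine hC ⟨by omega, ?_, ?_⟩
        · simp only [LoB]; push_cast; nlinarith [hpm]
        · simp only [HiB]
          push_cast
          have : (4:ℤ) ≤ (n:ℤ) := by exact_mod_cast (by omega : 4 ≤ n)
          nlinarith [this]
      subst hn3
      exact_mod_cast ach_F1
    by_cases hBex : p = 1 ∧ m = 2 ∧ s = -(n:ℤ)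
    · obtain ⟨rfl, rfl, rfl⟩ := hBex
      have hn3 : n = 3 := by
        by_contra hne
        refine hC ⟨by omega, ?_, ?_⟩
        · simp only [LoB]
          push_cast
          have : (4:ℤ) ≤ (n:ℤ) := by exact_mod_cast (by omega : 4 ≤ n)
          nlinarith [this]
        · simp only [HiB]; push_cast; nlinarith [hpm]
      subst hn3
      exact_mod_cast ach_F2
    -- general residual case
    have hAlow : 2*(s - (n:ℤ)) < LoB (p-1) m n := by
      by_contra hcon
      push_neg at hcon
      exact hA ⟨hp1, hcon, hAex⟩
    have hBhigh : HiB p (m-1) n < 2*(s + (n:ℤ)) := by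
      by_contra hcon
      push_neg at hcon
      exact hB ⟨hm1, hcon, hBex⟩
    have hA2 := par_lt _ _ (even_LoB (p-1) m n) hAlow
    have hB2 := par_gt _ _ (even_HiB p (m-1) n) hBhigh
    have eA : LoB (p-1) m n = ((p:ℤ)-1)*((p:ℤ)-2) + (m:ℤ)*((m:ℤ)+1) - 2*(m:ℤ)*(n:ℤ) := by
      simp only [LoB]; push_cast [Nat.cast_sub hp1]; ring
    have eB : HiB p (m-1) n = 2*(p:ℤ)*(n:ℤ) - (p:ℤ)*((p:ℤ)+1) - ((m:ℤ)-1)*((m:ℤ)-2) := by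
      simp only [HiB]; push_cast [Nat.cast_sub hm1]; ring
    rw [eA] at hA2
    rw [eB] at hB2
    have hpmN : 2 ≤ p * m := by
      rcases Nat.lt_or_ge p 2 with h2 | h2
      · have hp1' : p = 1 := by omega
        have hm2 : 2 ≤ m := by
          rcases Nat.lt_or_ge m 2 with h3 | h3
          · exact absurd ⟨hp1', by omega⟩ hp11
          · exact h3
        calc 2 ≤ m := hm2
        _ = p * m := by rw [hp1', one_mul]
      · calc 2 = 2 * 1 := rfl
          _ ≤ p * m := Nat.mul_le_mul h2 hm1
    have hpm2 : (2:ℤ) ≤ (p:ℤ)*(m:ℤ) := by exact_mod_cast hpmN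
    have hnpm : (p:ℤ) + (m:ℤ) ≤ (n:ℤ) := by exact_mod_cast hpm
    have hpp : (1:ℤ) ≤ (p:ℤ) := by exact_mod_cast hp1
    have hmm : (1:ℤ) ≤ (m:ℤ) := by exact_mod_cast hm1
    by_cases hCl : LoB p m n ≤ 2*s
    · by_cases hCu : 2*s ≤ HiB p m n
      · have hn_eq : p + m = n := by
          by_contra hne
          exact hC ⟨by omega, hCl, hCu⟩
        have hn' : (n:ℤ) = (p:ℤ) + (m:ℤ) := by exact_mod_cast hn_eq.symm
        exact (resid3 (p:ℤ) (m:ℤ) (n:ℤ) s hpp hmm hpm2 hn' (by linarith) (by linarith)).elim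
      · push_neg at hCu
        have hCu2 := par_gt _ _ (even_HiB p m n) hCu
        have eC : HiB p m n = 2*(p:ℤ)*(n:ℤ) - (p:ℤ)*((p:ℤ)+1) - (m:ℤ)*((m:ℤ)-1) := by
          simp only [HiB]
        rw [eC] at hCu2
        exact (resid1 (p:ℤ) (m:ℤ) (n:ℤ) s hpp hmm hnpm (by linarith) (by linarith)).elim
    · push_neg at hCl
      have hCl2 := par_lt _ _ (even_LoB p m n) hCl
      have eD : LoB p m n = (p:ℤ)*((p:ℤ)-1) + (m:ℤ)*((m:ℤ)+1) - 2*(m:ℤ)*(n:ℤ) := by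
        simp only [LoB]
      rw [eD] at hCl2
      exact (resid2 (p:ℤ) (m:ℤ) (n:ℤ) s hpp hmm hnpm (by linarith) (by linarith)).elim

lemma signedSumset_finite (h : ℕ) (A : Finset ℤ) : (signedSumset h A).Finite := by
  apply Set.Finite.subset (Set.finite_Icc (-(∑ v ∈ A, |v|)) (∑ v ∈ A, |v|))
  rintro x ⟨f, hf1, hf2, hf3, rfl⟩
  have hb : ∀ v ∈ A, |f v * v| ≤ |v| := by
    intro v hv
    rcases hf1 v with hc | hc | hc <;> simp [hc, abs_mul]
  have h1 := Finset.abs_sum_le_sum_abs (fun v => f v * v) A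
  have h2 := Finset.sum_le_sum hb
  have h3 : |∑ v ∈ A, f v * v| ≤ ∑ v ∈ A, |v| := le_trans h1 h2
  rw [Set.mem_Icc]
  constructor <;> linarith [abs_le.mp h3]

lemma mem_signedSumset (h k : ℕ) (a d : ℤ) (hd : 0 < d) (P M : Finset ℕ)
    (hP : P ⊆ range k) (hM : M ⊆ range k) (hdisj : Disjoint P M)
    (hcard : P.card + M.card = h) :
    ((P.card : ℤ) - (M.card : ℤ)) * a + ((∑ i ∈ P, (i:ℤ)) - ∑ i ∈ M, (i:ℤ)) * d
      ∈ signedSumset h ((range k).image (fun i : ℕ => a + (i:ℤ)*d)) := by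
  classical
  set g : ℕ → ℤ := fun i => a + (i:ℤ)*d with hg
  have hginj : ∀ i j : ℕ, g i = g j → i = j := by
    intro i j hij
    simp only [hg] at hij
    have h2 : (i:ℤ)*d = (j:ℤ)*d := by linarith
    have h3 : (i:ℤ) = (j:ℤ) := mul_right_cancel₀ (ne_of_gt hd) h2
    exact_mod_cast h3
  have hginj' : ∀ x ∈ range k, ∀ y ∈ range k, g x = g y → x = y := fun x _ y _ => hginj x y
  have hmemP : ∀ i : ℕ, g i ∈ P.image g ↔ i ∈ P := by
    intro i
    constructor
    · intro hgi
      obtain ⟨j, hj, hji⟩ := Finset.mem_image.mp hgi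
      rwa [hginj j i hji] at hj
    · exact fun hi => Finset.mem_image_of_mem g hi
  have hmemM : ∀ i : ℕ, g i ∈ M.image g ↔ i ∈ M := by
    intro i
    constructor
    · intro hgi
      obtain ⟨j, hj, hji⟩ := Finset.mem_image.mp hgi
      rwa [hginj j i hji] at hj
    · exact fun hi => Finset.mem_image_of_mem g hi
  refine ⟨fun x => if x ∈ P.image g then 1 else if x ∈ M.image g then -1 else 0, ?_, ?_, ?_, ?_⟩
  · intro v
    dsimp only
    split_ifs <;> simp
  · intro v hv
    have h1 : v ∉ P.image g := fun hc => hv (Finset.image_subset_image hP hc)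
    have h2 : v ∉ M.image g := fun hc => hv (Finset.image_subset_image hM hc)
    dsimp only
    rw [if_neg h1, if_neg h2]
  · rw [Finset.sum_image hginj']
    dsimp only
    have hpt : ∀ i ∈ range k,
        |if g i ∈ P.image g then (1:ℤ) else if g i ∈ M.image g then -1 else 0|
          = if i ∈ P ∪ M then (1:ℤ) else 0 := by
      intro i _
      by_cases hiP : i ∈ P
      · rw [if_pos ((hmemP i).mpr hiP), if_pos (Finset.mem_union_left _ hiP)]
        simp
      · rw [if_neg (fun hc => hiP ((hmemP i).mp hc))]
        by_cases hiM : i ∈ M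
        · rw [if_pos ((hmemM i).mpr hiM), if_pos (Finset.mem_union_right _ hiM)]
          simp
        · rw [if_neg (fun hc => hiM ((hmemM i).mp hc))]
          rw [if_neg (by simp [hiP, hiM])]
          simp
    rw [Finset.sum_congr rfl hpt, Finset.sum_ite_mem,
      Finset.inter_eq_right.mpr (Finset.union_subset hP hM), Finset.sum_const,
      Finset.card_union_of_disjoint hdisj]
    push_cast [hcard]
    ring
  · rw [Finset.sum_image hginj']
    dsimp only
    have hpt : ∀ i ∈ range k,
        (if g i ∈ P.image g then (1:ℤ) else if g i ∈ M.image g then -1 else 0) * g i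
          = (if i ∈ P then g i else 0) - (if i ∈ M then g i else 0) := by
      intro i _
      by_cases hiP : i ∈ P
      · have hiM : i ∉ M := Finset.disjoint_left.mp hdisj hiP
        rw [if_pos ((hmemP i).mpr hiP), if_pos hiP, if_neg hiM]
        ring
      · rw [if_neg (fun hc => hiP ((hmemP i).mp hc)), if_neg hiP]
        by_cases hiM : i ∈ M
        · rw [if_pos ((hmemM i).mpr hiM), if_pos hiM]
          ring
        · rw [if_neg (fun hc => hiM ((hmemM i).mp hc)), if_neg hiM]
          ring
    rw [Finset.sum_congr rfl hpt, Finset.sum_sub_distrib, Finset.sum_ite_mem, Finset.sum_ite_mem,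
      Finset.inter_eq_right.mpr hP, Finset.inter_eq_right.mpr hM]
    have hPs : ∑ i ∈ P, g i = (P.card : ℤ) * a + (∑ i ∈ P, (i:ℤ)) * d := by
      simp only [hg]
      rw [Finset.sum_add_distrib, Finset.sum_const, Finset.sum_mul, nsmul_eq_mul]
    have hMs : ∑ i ∈ M, g i = (M.card : ℤ) * a + (∑ i ∈ M, (i:ℤ)) * d := by
      simp only [hg]
      rw [Finset.sum_add_distrib, Finset.sum_const, Finset.sum_mul, nsmul_eq_mul]
    rw [hPs, hMs]
    ring

lemma lenIneq (P M K E : ℤ) (hp : 0 ≤ P) (hm : 1 ≤ M) (h3 : 3 ≤ P + M)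
    (hkk : P + M + 1 ≤ K) (he : E ≤ 1) :
    2*(K - (P+M) + 2*P + 1 + E) ≤ (2*K*(P+M) - 2*P^2 - 2*M^2) + 2 := by
  rcases eq_or_lt_of_le hp with hp0 | hp1
  · nlinarith [mul_nonneg (by linarith : (0:ℤ) ≤ P+M-3) (by linarith : (0:ℤ) ≤ K-P-M-1), hp0]
  · have hp1' : 1 ≤ P := hp1
    nlinarith [mul_nonneg (by linarith : (0:ℤ) ≤ K-P-M-1) (by linarith : (0:ℤ) ≤ P+M-1),
      mul_nonneg (by linarith : (0:ℤ) ≤ M-1) (by linarith : (0:ℤ) ≤ 2*P+1),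
      mul_nonneg (by linarith : (0:ℤ) ≤ M-1) (by linarith : (0:ℤ) ≤ P)]

lemma lower_bound (h k : ℕ) (a d : ℤ) (hh : 3 ≤ h) (hk : h + 1 ≤ k) (ha : 0 < a) (hd : 0 < d)
    (e : ℕ) (he : e ≤ 1) (hde : e = 1 → d ≠ 2*a) :
    ∃ F : Finset ℤ, ↑F ⊆ signedSumset h ((range k).image (fun i : ℕ => a + (i:ℤ)*d)) ∧
      F.card + h^2 = 2*h*k + h*e + 1 := by
  classical
  have hhk : h ≤ k := by omega
  have hh2 : h^2 ≤ h*k := by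
    rw [pow_two]
    exact Nat.mul_le_mul (le_refl h) hhk
  set lo : ℕ → ℤ := fun p =>
    ((∑ i ∈ range p, i : ℕ) : ℤ) + ((∑ i ∈ range (h-p), i : ℕ) : ℤ)
      + ((h:ℤ) - (p:ℤ)) - ((h:ℤ) - (p:ℤ))*(k:ℤ) with hlo
  have two_lo : ∀ p : ℕ, p ≤ h → 2 * lo p = LoB p (h-p) k := by
    intro p hp
    have t1 := Tcast p
    have t2 := Tcast (h-p)
    have hc : ((h - p : ℕ):ℤ) = (h:ℤ) - (p:ℤ) := by push_cast [Nat.cast_sub hp]; ring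
    rw [hc] at t2
    simp only [hlo, LoB, hc]
    linear_combination t1 + t2
  set len : ℕ → ℕ := fun p => if p = h then h*k - h^2 + 1 else k - h + 2*p + 1 + e with hlen
  have hlenh : (len h : ℤ) = (h:ℤ)*k - (h:ℤ)^2 + 1 := by
    simp only [hlen, if_pos rfl]
    push_cast [Nat.cast_sub hh2]
    ring
  have hlenp : ∀ p : ℕ, p < h → (len p : ℤ) = (k:ℤ) - h + 2*p + 1 + e := by
    intro p hp
    simp only [hlen, if_neg (by omega : p ≠ h)]
    push_cast [Nat.cast_sub hhk]
    ring
  have hLEN : ∀ p : ℕ, p ≤ h → 2*(len p : ℤ) ≤ HiB p (h-p) k - LoB p (h-p) k + 2 := by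
    intro p hp
    have hc : ((h - p : ℕ):ℤ) = (h:ℤ) - (p:ℤ) := by push_cast [Nat.cast_sub hp]; ring
    rcases eq_or_lt_of_le hp with hph | hph
    · subst hph
      rw [hlenh]
      simp only [HiB, LoB, hc]
      have : HiB p (p-p) k - LoB p (p-p) k + 2 = 2*((p:ℤ)*k - (p:ℤ)^2 + 1) := by
        simp only [HiB, LoB, hc]
        ring
      simp only [HiB, LoB, hc] at this
      linarith [this]
    · rw [hlenp p hph]
      have hb1 : (1:ℤ) ≤ (h:ℤ) - p := by
        have : p + 1 ≤ h := hph
        have h2 : (p:ℤ) + 1 ≤ (h:ℤ) := by exact_mod_cast this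
        linarith
      have hb2 : (3:ℤ) ≤ (p:ℤ) + ((h:ℤ) - p) := by
        have h2 : (3:ℤ) ≤ (h:ℤ) := by exact_mod_cast hh
        linarith
      have hb3 : (p:ℤ) + ((h:ℤ) - p) + 1 ≤ (k:ℤ) := by
        have h2 : (h:ℤ) + 1 ≤ (k:ℤ) := by exact_mod_cast hk
        linarith
      have hineq := lenIneq (p:ℤ) ((h:ℤ)-p) (k:ℤ) (e:ℤ) (by positivity)
        hb1 hb2 hb3 (by exact_mod_cast he)
      simp only [HiB, LoB, hc]
      nlinarith [hineq]
  have lodiff : ∀ p q : ℕ, q ≤ h → p < q →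
      2*(lo q - lo p) = 2*((q:ℤ)-p)*((k:ℤ)-h+p+q-1) := by
    intro p q hq hpq
    have hp : p ≤ h := by omega
    have l1 := two_lo p hp
    have l2 := two_lo q hq
    have hcp : ((h - p : ℕ):ℤ) = (h:ℤ) - (p:ℤ) := by push_cast [Nat.cast_sub hp]; ring
    have hcq : ((h - q : ℕ):ℤ) = (h:ℤ) - (q:ℤ) := by push_cast [Nat.cast_sub hq]; ring
    simp only [LoB, hcp, hcq] at l1 l2
    linear_combination l2 - l1
  have hkh : (1:ℤ) ≤ (k:ℤ) - h := by
    have : (h:ℤ) + 1 ≤ (k:ℤ) := by exact_mod_cast hk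
    linarith
  have hcollide : ∀ p q t u : ℕ, p < q → q ≤ h → t < len p →
      (2*(p:ℤ) - h)*a + (lo p + t)*d ≠ (2*(q:ℤ) - h)*a + (lo q + u)*d := by
    intro p q t u hpq hq ht heq
    have hp0 : (0:ℤ) ≤ (p:ℤ) := by positivity
    have hu0 : (0:ℤ) ≤ (u:ℤ) := by positivity
    have hV : (lo p + (t:ℤ) - lo q - u) * d = 2*((q:ℤ)-(p:ℤ))*a := by linear_combination heq
    have hqp1 : (1:ℤ) ≤ (q:ℤ)-(p:ℤ) := by
      have : p + 1 ≤ q := hpq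
      have : (p:ℤ) + 1 ≤ (q:ℤ) := by exact_mod_cast this
      linarith
    have hVd : 0 < (lo p + (t:ℤ) - lo q - u) * d := by
      rw [hV]
      apply mul_pos (by linarith) ha
    have hVpos : 0 < lo p + (t:ℤ) - lo q - u := by
      by_contra hcon
      push_neg at hcon
      nlinarith [hVd, hd]
    have hV1 : 1 ≤ lo p + (t:ℤ) - lo q - u := hVpos
    have hld := lodiff p q hq hpq
    have htb : (t:ℤ) ≤ (k:ℤ) - h + 2*p + e := by
      have hlp := hlenp p (by omega : p < h)
      have : (t:ℤ) + 1 ≤ (len p : ℤ) := by exact_mod_cast Nat.succ_le_of_lt ht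
      rw [hlp] at this
      linarith
    have hecast : (e:ℤ) ≤ 1 := by exact_mod_cast he
    by_cases hq1 : q = p + 1
    · have hΔ : (q:ℤ) = (p:ℤ)+1 := by exact_mod_cast hq1
      have hld' : 2*(lo q - lo p) = 2*((k:ℤ)-h+2*p) := by
        rw [hld, hΔ]; ring
      have hVd2 : (lo p + (t:ℤ) - lo q - u)*d = 2*a := by
        rw [hV, hΔ]; ring
      by_cases hV1' : lo p + (t:ℤ) - lo q - u = 1
      · have hdeq : d = 2*a := by
          rw [hV1'] at hVd2
          linarith
        have he0 : e = 0 := by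
          by_contra hne
          exact (hde (by omega)) hdeq
        have he0' : (e:ℤ) = 0 := by exact_mod_cast he0
        linarith [hld', hV1', hu0, htb, he0']
      · have hV2 : 2 ≤ lo p + (t:ℤ) - lo q - u := by
          rcases lt_or_eq_of_le hV1 with hlt | heq2
          · linarith [Int.lt_iff_add_one_le.mp hlt]
          · exact absurd heq2.symm hV1'
        linarith [hld', hV2, hu0, htb, hecast]
    · have hΔ2 : (2:ℤ) ≤ (q:ℤ)-(p:ℤ) := by
        have : p + 2 ≤ q := by omega
        have : (p:ℤ) + 2 ≤ (q:ℤ) := by exact_mod_cast this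
        linarith
      have hnn : (0:ℤ) ≤ (k:ℤ)-h+p+q-1 := by linarith
      have hmul : 2*((k:ℤ)-h+p+q-1) ≤ ((q:ℤ)-p)*((k:ℤ)-h+p+q-1) :=
        mul_le_mul_of_nonneg_right hΔ2 hnn
      linarith [hld, hV1, hu0, htb, hecast, hmul, hΔ2]
  have hinj : Set.InjOn (fun pr : (_ : ℕ) × ℕ => (2*(pr.1:ℤ) - (h:ℤ))*a + (lo pr.1 + (pr.2:ℤ))*d)
      ↑((range (h+1)).sigma (fun p => range (len p))) := by
    rintro ⟨p, t⟩ hpt ⟨q, u⟩ hqu heq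
    simp only [Finset.mem_coe, Finset.mem_sigma, Finset.mem_range] at hpt hqu
    obtain ⟨hp1, hp2⟩ := hpt
    obtain ⟨hq1, hq2⟩ := hqu
    dsimp only at heq hp1 hp2 hq1 hq2
    rcases lt_trichotomy p q with hlt | heqpq | hgt
    · exact absurd heq (hcollide p q t u hlt (by omega) hp2)
    · subst heqpq
      have hdt : (lo p + (t:ℤ))*d = (lo p + (u:ℤ))*d := by linarith [heq]
      have htu : lo p + (t:ℤ) = lo p + (u:ℤ) := mul_right_cancel₀ (ne_of_gt hd) hdt
      have : t = u := by
        have : (t:ℤ) = (u:ℤ) := by linarith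
        exact_mod_cast this
      subst this
      rfl
    · exact absurd heq.symm (hcollide q p u t hgt (by omega) hq2)
  refine ⟨((range (h+1)).sigma (fun p => range (len p))).image
      (fun pr : (_ : ℕ) × ℕ => (2*(pr.1:ℤ) - (h:ℤ))*a + (lo pr.1 + (pr.2:ℤ))*d), ?_, ?_⟩
  · rintro x hx
    rw [Finset.mem_coe, Finset.mem_image] at hx
    obtain ⟨⟨p, t⟩, hmem, rfl⟩ := hx
    simp only [Finset.mem_sigma, Finset.mem_range] at hmem
    obtain ⟨hp1, ht1⟩ := hmem
    have hp : p ≤ h := by omega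
    have hexc : ¬(p = 1 ∧ h - p = 1 ∧ lo p + (t:ℤ) = 0) := by
      rintro ⟨h1, h2, _⟩
      omega
    have ht0 : (0:ℤ) ≤ (t:ℤ) := by positivity
    have hlow : LoB p (h-p) k ≤ 2*(lo p + (t:ℤ)) := by
      have := two_lo p hp
      linarith
    have hupp : 2*(lo p + (t:ℤ)) ≤ HiB p (h-p) k := by
      have h1 := two_lo p hp
      have h2 := hLEN p hp
      have h3 : (t:ℤ) + 1 ≤ (len p : ℤ) := by exact_mod_cast Nat.succ_le_of_lt ht1
      linarith
    obtain ⟨P, M, hPsub, hMsub, hdisj, hcP, hcM, hsum⟩ :=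
      key k p (h-p) (lo p + (t:ℤ)) (by omega) hexc hlow hupp
    have hmm := mem_signedSumset h k a d hd P M hPsub hMsub hdisj (by omega)
    rw [hcP, hcM, hsum] at hmm
    have hco : ((p:ℤ) - ((h-p:ℕ):ℤ)) = 2*(p:ℤ) - (h:ℤ) := by
      push_cast [Nat.cast_sub hp]
      ring
    rw [hco] at hmm
    exact hmm
  · rw [Finset.card_image_of_injOn hinj, Finset.card_sigma]
    simp only [Finset.card_range]
    rw [Finset.sum_range_succ]
    have h1 : ∀ p ∈ range h, len p = k - h + 2*p + 1 + e := by
      intro p hp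
      rw [Finset.mem_range] at hp
      simp only [hlen, if_neg (by omega : p ≠ h)]
    rw [Finset.sum_congr rfl h1]
    have hcast : (((∑ p ∈ range h, (k - h + 2*p + 1 + e)) + len h + h^2 : ℕ) : ℤ)
        = ((2*h*k + h*e + 1 : ℕ) : ℤ) → (∑ p ∈ range h, (k - h + 2*p + 1 + e)) + len h + h^2
        = 2*h*k + h*e + 1 := fun hcc => by exact_mod_cast hcc
    apply hcast
    push_cast [Nat.cast_sub hhk]
    rw [Finset.sum_add_distrib, Finset.sum_add_distrib, Finset.sum_add_distrib]
    simp only [Finset.sum_const, Finset.card_range, nsmul_eq_mul, mul_one]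
    have hgauss : ∑ p ∈ range h, (2*(p:ℤ)) = (h:ℤ)*((h:ℤ)-1) := by
      rw [← Finset.mul_sum]
      have := Tcast h
      have hc2 : ((∑ i ∈ range h, i : ℕ):ℤ) = ∑ i ∈ range h, (i:ℤ) := by push_cast; rfl
      rw [hc2] at this
      linarith
    rw [hgauss, hlenh]
    ring

lemma upper_bound (h k : ℕ) (a : ℤ) (hh : 3 ≤ h) (hk : h + 1 ≤ k) (ha : 0 < a) :
    (signedSumset h ((range k).image (fun i : ℕ => a + (i:ℤ)*(2*a)))).ncard
      ≤ 2*h*k - h^2 + 1 := by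
  classical
  have hh2 : h^2 ≤ 2*h*k := by
    have h1 : h*h ≤ h*k := Nat.mul_le_mul (le_refl h) (by omega)
    have h2 : 2*h*k = h*k + h*k := by ring
    have h3 : 0 ≤ h*k := Nat.zero_le _
    rw [pow_two]
    linarith
  set W : ℤ := 2*(h:ℤ)*(k:ℤ) - (h:ℤ)^2 with hW
  set T : Finset ℤ := (range (2*h*k - h^2 + 1)).image (fun i : ℕ => (2*(i:ℤ) - W)*a) with hT
  have hsub : signedSumset h ((range k).image (fun i : ℕ => a + (i:ℤ)*(2*a))) ⊆ ↑T := by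
    rintro x ⟨f, hf1, hf2, hf3, rfl⟩
    set g : ℕ → ℤ := fun i => a + (i:ℤ)*(2*a) with hg
    have hginj' : ∀ x ∈ range k, ∀ y ∈ range k, g x = g y → x = y := by
      intro i _ j _ hij
      simp only [hg] at hij
      have h2 : (i:ℤ)*(2*a) = (j:ℤ)*(2*a) := by linarith
      have h3 : (i:ℤ) = (j:ℤ) := mul_right_cancel₀ (by positivity) h2
      exact_mod_cast h3
    rw [Finset.sum_image hginj'] at hf3 ⊢
    set w : ℤ := ∑ i ∈ range k, f (g i) * (2*(i:ℤ)+1) with hw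
    have hxw : ∑ i ∈ range k, f (g i) * g i = w * a := by
      rw [hw, Finset.sum_mul]
      apply Finset.sum_congr rfl
      intro i _
      simp only [hg]
      ring
    -- parity
    have hpar : (2:ℤ) ∣ (w - h) := by
      rw [← hf3, hw, ← Finset.sum_sub_distrib]
      apply Finset.dvd_sum
      intro i _
      rcases hf1 (g i) with hc | hc | hc
      · refine ⟨-(i:ℤ)-1, ?_⟩
        rw [hc]
        simp only [abs_neg, abs_one]
        ring
      · refine ⟨0, ?_⟩
        rw [hc]
        simp
      · refine ⟨(i:ℤ), ?_⟩
        rw [hc]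
        simp only [abs_one]
        ring
    -- support
    set supp : Finset ℕ := (range k).filter (fun i => f (g i) ≠ 0) with hsupp
    have hsuppsub : supp ⊆ range k := Finset.filter_subset _ _
    have hcards : (supp.card : ℤ) = (h:ℤ) := by
      rw [← hf3]
      have hpt : ∀ i ∈ range k, |f (g i)| = if i ∈ supp then (1:ℤ) else 0 := by
        intro i hi
        rcases hf1 (g i) with hc | hc | hc <;>
          simp [hsupp, Finset.mem_filter, hc, hi]
      rw [Finset.sum_congr rfl hpt, Finset.sum_ite_mem,
        Finset.inter_eq_right.mpr hsuppsub, Finset.sum_const, nsmul_eq_mul, mul_one]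
    have hwsupp : w = ∑ i ∈ supp, f (g i) * (2*(i:ℤ)+1) := by
      rw [hw]
      symm
      apply Finset.sum_subset hsuppsub
      intro i hi hni
      have : f (g i) = 0 := by
        by_contra hcon
        exact hni (Finset.mem_filter.mpr ⟨hi, hcon⟩)
      rw [this, zero_mul]
    have habs : |w| ≤ ∑ i ∈ supp, (2*(i:ℤ)+1) := by
      rw [hwsupp]
      refine le_trans (Finset.abs_sum_le_sum_abs _ _) (Finset.sum_le_sum ?_)
      intro i hi
      have hfne : f (g i) ≠ 0 := (Finset.mem_filter.mp hi).2
      rcases hf1 (g i) with hc | hc | hc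
      · rw [hc, abs_mul]
        simp [abs_of_nonneg (by positivity : (0:ℤ) ≤ 2*(i:ℤ)+1)]
      · exact absurd hc hfne
      · rw [hc, abs_mul]
        simp [abs_of_nonneg (by positivity : (0:ℤ) ≤ 2*(i:ℤ)+1)]
    have hsumval : ∑ i ∈ supp, (2*(i:ℤ)+1) = 2*(∑ i ∈ supp, (i:ℤ)) + supp.card := by
      rw [Finset.sum_add_distrib, Finset.sum_const, nsmul_eq_mul, mul_one, Finset.mul_sum]
    have hupper := sum_upper_int k supp hsuppsub
    have hwb : |w| ≤ W := by
      rw [hW]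
      calc |w| ≤ ∑ i ∈ supp, (2*(i:ℤ)+1) := habs
      _ = 2*(∑ i ∈ supp, (i:ℤ)) + supp.card := hsumval
      _ ≤ (2*(supp.card:ℤ)*k - (supp.card:ℤ)*((supp.card:ℤ)+1)) + supp.card := by linarith
      _ = 2*(h:ℤ)*(k:ℤ) - (h:ℤ)^2 := by rw [hcards]; ring
    obtain ⟨r, hr⟩ := hpar
    obtain ⟨uu, huu⟩ := even_pred_mul (h:ℤ)
    have hwabs := abs_le.mp hwb
    set i0z : ℤ := r + (h:ℤ)*(k:ℤ) - uu with hi0z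
    have h2i0 : 2*i0z = w + W := by
      have hexp : (h:ℤ)*((h:ℤ)-1) = (h:ℤ)^2 - h := by ring
      rw [hi0z, hW]
      linarith [huu, hexp, hr]
    have hi0nn : 0 ≤ i0z := by linarith
    have hi0le : i0z ≤ W := by linarith
    refine Finset.mem_coe.mpr (Finset.mem_image.mpr ⟨i0z.toNat, ?_, ?_⟩)
    · rw [Finset.mem_range]
      have hcastN : ((2*h*k - h^2 + 1 : ℕ):ℤ) = W + 1 := by
        have h1 : ((2*h*k - h^2 : ℕ):ℤ) = 2*(h:ℤ)*k - (h:ℤ)^2 := by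
          rw [Nat.cast_sub hh2]
          push_cast
          ring
        rw [Nat.cast_add, Nat.cast_one, h1, hW]
      have hlt : (i0z.toNat : ℤ) < ((2*h*k - h^2 + 1 : ℕ):ℤ) := by
        rw [Int.toNat_of_nonneg hi0nn, hcastN]
        linarith
      exact_mod_cast hlt
    · rw [hxw, Int.toNat_of_nonneg hi0nn,
        show 2*i0z - W = w from by linarith]
  calc (signedSumset h ((range k).image (fun i : ℕ => a + (i:ℤ)*(2*a)))).ncard
      ≤ (↑T : Set ℤ).ncard := Set.ncard_le_ncard hsub T.finite_toSet
  _ = T.card := Set.ncard_coe_finset T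
  _ ≤ (range (2*h*k - h^2 + 1)).card := Finset.card_image_le
  _ = 2*h*k - h^2 + 1 := Finset.card_range _

theorem stmt6 (h k : ℕ) (hh : 3 ≤ h) (hk : h + 1 ≤ k) (a d : ℤ)
    (ha : 0 < a) (hd : 0 < d)
    (A : Finset ℤ) (hA : A = (Finset.range k).image (fun i : ℕ => a + (i : ℤ) * d)) :
    (d = 2 * a → 2 * h * k - h ^ 2 + 1 ≤ (signedSumset h A).ncard) ∧
    (d ≠ 2 * a → 2 * h * k - h ^ 2 + 2 ≤ (signedSumset h A).ncard) ∧
    ((signedSumset h A).ncard = 2 * h * k - h ^ 2 + 1 ↔ d = 2 * a) := by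
  subst hA
  have hfin := signedSumset_finite h ((range k).image (fun i : ℕ => a + (i:ℤ)*d))
  obtain ⟨Q, hQ⟩ : ∃ Q, 2*h*k = Q := ⟨_, rfl⟩
  obtain ⟨R, hR⟩ : ∃ R, h^2 = R := ⟨_, rfl⟩
  have hh2 : R ≤ h*k := by
    rw [← hR, pow_two]
    exact Nat.mul_le_mul (le_refl h) (by omega)
  have hQhk : h*k + h*k = Q := by rw [← hQ]; ring
  -- unconditional lower bound (e = 0)
  obtain ⟨F0, hF0sub, hF0card⟩ := lower_bound h k a d hh hk ha hd 0 (by omega)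
    (fun hc => absurd hc (by omega))
  have hlow0 : Q + 1 ≤ (signedSumset h ((range k).image (fun i : ℕ => a + (i:ℤ)*d))).ncard + R := by
    have h1 : F0.card ≤ (signedSumset h ((range k).image (fun i : ℕ => a + (i:ℤ)*d))).ncard := by
      rw [← Set.ncard_coe_finset F0]
      exact Set.ncard_le_ncard hF0sub hfin
    rw [hQ, hR] at hF0card
    simp only [Nat.mul_zero, Nat.add_zero] at hF0card
    omega
  have goal1 : 2*h*k - h^2 + 1 ≤ (signedSumset h ((range k).image (fun i : ℕ => a + (i:ℤ)*d))).ncard := by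
    rw [hQ, hR]
    omega
  have goal2 : d ≠ 2*a → 2*h*k - h^2 + 2 ≤ (signedSumset h ((range k).image (fun i : ℕ => a + (i:ℤ)*d))).ncard := by
    intro hdne
    obtain ⟨F1, hF1sub, hF1card⟩ := lower_bound h k a d hh hk ha hd 1 (le_refl 1)
      (fun _ => hdne)
    have h1 : F1.card ≤ (signedSumset h ((range k).image (fun i : ℕ => a + (i:ℤ)*d))).ncard := by
      rw [← Set.ncard_coe_finset F1]
      exact Set.ncard_le_ncard hF1sub hfin
    rw [hQ, hR] at hF1card
    rw [hQ, hR]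
    simp only [Nat.mul_one] at hF1card
    omega
  refine ⟨fun _ => goal1, goal2, ?_, ?_⟩
  · intro hnc
    by_contra hdne
    have h2 := goal2 hdne
    rw [hnc] at h2
    rw [hQ, hR] at h2
    omega
  · intro hdeq
    subst hdeq
    apply le_antisymm
    · exact upper_bound h k a hh hk ha
    · exact goal1
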